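/- Every matrix ρ on ℂ^d is recovered from its discrete Wigner function via the phase-point operators: ρ = Σ_{(m,n) ∈ ZMod d × ZMod d} ρ_W(m,n) · A(m,n). -/

import Mathlib

open Matrix Complex

noncomputable section

/-- `ω = exp(2πi/d)`, a primitive `d`-th root of unity. -/
def omega (d : ℕ) : ℂ := Complex.exp (2 * Real.pi * Complex.I / d)

/-- Powers of `ω` with exponent valued in `ZMod d`, evaluated via the canonical
integer representative (well-defined since `ω ^ d = 1`). -/
def wpow (d : ℕ) (x : ZMod d) : ℂ := omega d ^ x.val

/-- The clock matrix `Z`, acting as `Z e_n = ω^n e_n`. -/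
def clockZ (d : ℕ) : Matrix (ZMod d) (ZMod d) ℂ :=
  Matrix.diagonal (fun n => wpow d n)

/-- The shift matrix `X`, acting as `X e_n = e_{n+1}`. -/
def shiftX (d : ℕ) : Matrix (ZMod d) (ZMod d) ℂ :=
  Matrix.of (fun i j => if i = j + 1 then 1 else 0)

/-- The displacement operator `D(k,j) = ω^{-2⁻¹ k j} Z^k X^j`. -/
def Dop (d : ℕ) [NeZero d] (k j : ZMod d) : Matrix (ZMod d) (ZMod d) ℂ :=
  wpow d (-(2⁻¹ * k * j)) • (clockZ d ^ k.val * shiftX d ^ j.val)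

/-- The Weyl symbol of a matrix `A`: `Ã(k,j) = Tr(A · D(k,j))`. -/
def weylSymbol (d : ℕ) [NeZero d] (A : Matrix (ZMod d) (ZMod d) ℂ) (k j : ZMod d) : ℂ :=
  Matrix.trace (A * Dop d k j)

/-- The discrete Wigner function of `ρ`:
`ρ_W(m,n) = (1/d²) Σ_{k,j} Tr(ρ·D(k,j)) ω^{jn−km}`. -/
def wignerFn (d : ℕ) [NeZero d] (ρ : Matrix (ZMod d) (ZMod d) ℂ) (m n : ZMod d) : ℂ :=
  (1 / (d : ℂ) ^ 2) * ∑ k : ZMod d, ∑ j : ZMod d,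
    weylSymbol d ρ k j * wpow d (j * n - k * m)

/-- The phase-point operators `A(m,n) = (1/d) Σ_{k,j} ω^{km−jn} D(k,j)†`. -/
def phasePoint (d : ℕ) [NeZero d] (m n : ZMod d) : Matrix (ZMod d) (ZMod d) ℂ :=
  (1 / (d : ℂ)) • ∑ k : ZMod d, ∑ j : ZMod d, wpow d (k * m - j * n) • (Dop d k j)ᴴ


section Aux

open Finset

set_option linter.unusedSectionVars false
set_option linter.unusedVariables false

variable {d : ℕ} [NeZero d]

lemma omega_pow_d : omega d ^ d = 1 :=
  (Complex.isPrimitiveRoot_exp d (NeZero.ne d)).pow_eq_one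

lemma omega_pow_natCast (n : ℕ) : omega d ^ n = wpow d (n : ZMod d) := by
  conv_lhs => rw [← Nat.div_add_mod n d]
  rw [pow_add, pow_mul, omega_pow_d, one_pow, one_mul, wpow, ZMod.val_natCast]

lemma wpow_natCast_val (x : ZMod d) : wpow d ((x.val : ZMod d)) = wpow d x := by
  simp [ZMod.natCast_val, ZMod.cast_id]

lemma wpow_zero : wpow d (0 : ZMod d) = 1 := by
  simp [wpow, ZMod.val_zero]

lemma wpow_add (x y : ZMod d) : wpow d (x + y) = wpow d x * wpow d y := by
  have : wpow d x * wpow d y = omega d ^ (x.val + y.val) := by rw [pow_add]; rfl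
  rw [this, omega_pow_natCast]
  push_cast
  simp [ZMod.natCast_val, ZMod.cast_id]

lemma wpow_pow (x : ZMod d) (n : ℕ) : wpow d x ^ n = wpow d ((n : ZMod d) * x) := by
  have : wpow d x ^ n = omega d ^ (x.val * n) := by rw [pow_mul]; rfl
  rw [this, omega_pow_natCast]
  push_cast
  simp only [ZMod.natCast_val, ZMod.cast_id]
  ring_nf

lemma wpow_mul_wpow_neg (x : ZMod d) : wpow d x * wpow d (-x) = 1 := by
  rw [← wpow_add]; simp [wpow_zero]

lemma wpow_ne_zero (x : ZMod d) : wpow d x ≠ 0 :=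
  fun h => one_ne_zero (by rw [← wpow_mul_wpow_neg x, h, zero_mul])

lemma wpow_neg (x : ZMod d) : wpow d (-x) = (wpow d x)⁻¹ :=
  eq_inv_of_mul_eq_one_right (by rw [← wpow_add]; simp [wpow_zero])

lemma conj_wpow (x : ZMod d) : (starRingEnd ℂ) (wpow d x) = wpow d (-x) := by
  have habs : ‖omega d‖ = 1 := by
    simp [omega, Complex.norm_exp]
  have h1 : ‖wpow d x‖ = 1 := by
    rw [wpow, norm_pow, habs, one_pow]
  rw [wpow_neg]
  rw [Complex.inv_def, Complex.normSq_eq_norm_sq, h1]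
  simp

lemma sum_wpow_zmod : ∑ k : ZMod d, wpow d k = ∑ i ∈ Finset.range d, omega d ^ i := by
  rw [Finset.sum_nbij' (i := fun (k : ZMod d) => k.val) (j := fun (i : ℕ) => (i : ZMod d))]
  · intro k _; simp [ZMod.val_lt]
  · intro i hi; simp
  · intro k _; simp [ZMod.natCast_val, ZMod.cast_id]
  · intro i hi; simp [ZMod.val_natCast_of_lt (Finset.mem_range.mp hi)]
  · intro k _; rfl

lemma sum_wpow_delta (hd : Nat.Prime d) (hodd : Odd d) (t : ZMod d) :
    ∑ k : ZMod d, wpow d (k * t) = if t = 0 then (d : ℂ) else 0 := by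
  haveI : Fact (Nat.Prime d) := ⟨hd⟩
  split_ifs with h
  · subst h; simp [wpow_zero, ZMod.card]
  · have h1 : ∑ k : ZMod d, wpow d (k * t) = ∑ k : ZMod d, wpow d k :=
      Fintype.sum_equiv (Equiv.mulRight₀ t h) _ _ (fun k => rfl)
    rw [h1, sum_wpow_zmod]
    exact (Complex.isPrimitiveRoot_exp d (NeZero.ne d)).geom_sum_eq_zero hd.one_lt

lemma shiftX_pow (e : ℕ) (a b : ZMod d) :
    (shiftX d ^ e) a b = if a = b + (e : ZMod d) then 1 else 0 := by
  induction e generalizing a b with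
  | zero => simp [Matrix.one_apply, eq_comm]
  | succ e ih =>
    rw [pow_succ, Matrix.mul_apply]
    have : ∀ c : ZMod d, (shiftX d ^ e) a c * shiftX d c b
        = if c = b + 1 then (shiftX d ^ e) a c else 0 := by
      intro c; simp only [shiftX, Matrix.of_apply]; split_ifs <;> simp
    rw [Finset.sum_congr rfl (fun c _ => this c), Finset.sum_ite_eq' Finset.univ (b+1)]
    simp only [Finset.mem_univ, if_true, ih]
    have : (b + 1) + (e : ZMod d) = b + ((e + 1 : ℕ) : ZMod d) := by push_cast; ring
    rw [this]

lemma clockZ_pow (e : ℕ) (a b : ZMod d) :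
    (clockZ d ^ e) a b = if a = b then wpow d ((e : ZMod d) * a) else 0 := by
  rw [clockZ, Matrix.diagonal_pow, Matrix.diagonal_apply]
  split_ifs with h
  · rw [Pi.pow_apply, wpow_pow]
  · rfl

lemma Dop_apply (k j a b : ZMod d) :
    Dop d k j a b = if a = b + j then wpow d (-(2⁻¹ * k * j) + k * a) else 0 := by
  rw [Dop, Matrix.smul_apply, Matrix.mul_apply]
  have : ∀ c : ZMod d, (clockZ d ^ k.val) a c * (shiftX d ^ j.val) c b
      = if c = a then wpow d ((k.val : ZMod d) * a) * (shiftX d ^ j.val) c b else 0 := by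
    intro c; rw [clockZ_pow]; split_ifs with h1 h2 h2 <;> simp_all [eq_comm]
  rw [Finset.sum_congr rfl (fun c _ => this c), Finset.sum_ite_eq' Finset.univ a]
  simp only [Finset.mem_univ, if_true, shiftX_pow]
  simp only [ZMod.natCast_val, ZMod.cast_id]
  split_ifs with h
  · rw [smul_eq_mul, mul_one, ← wpow_add]
  · simp

lemma DopH_apply (k j p q : ZMod d) :
    (Dop d k j)ᴴ p q = if q = p + j then wpow d (2⁻¹ * k * j - k * q) else 0 := by
  rw [Matrix.conjTranspose_apply, Dop_apply]
  split_ifs with h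
  · rw [RCLike.star_def, conj_wpow]; congr 1; ring
  · simp

lemma weyl_apply (A : Matrix (ZMod d) (ZMod d) ℂ) (k j : ZMod d) :
    weylSymbol d A k j = ∑ x : ZMod d, A x (x + j) * wpow d (-(2⁻¹ * k * j) + k * (x + j)) := by
  rw [weylSymbol, Matrix.trace]
  simp only [Matrix.diag, Matrix.mul_apply]
  refine Finset.sum_congr rfl fun x _ => ?_
  have : ∀ y : ZMod d, A x y * Dop d k j y x
      = if y = x + j then A x y * wpow d (-(2⁻¹ * k * j) + k * y) else 0 := by
    intro y; rw [Dop_apply]; split_ifs <;> simp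
  rw [Finset.sum_congr rfl (fun y _ => this y), Finset.sum_ite_eq' Finset.univ (x + j)]
  simp

lemma zmod_two_ne_zero (hd : Nat.Prime d) (hodd : Odd d) : (2 : ZMod d) ≠ 0 := by
  haveI : Fact (Nat.Prime d) := ⟨hd⟩
  have : ((2 : ℕ) : ZMod d) ≠ 0 := by
    rw [Ne, ZMod.natCast_eq_zero_iff]
    intro h
    have h1 : d = 2 := le_antisymm (Nat.le_of_dvd (by norm_num) h) hd.two_le
    rw [h1] at hodd
    simp [Nat.odd_iff] at hodd
  simpa using this

lemma stepB (hd : Nat.Prime d) (hodd : Odd d) (ρ : Matrix (ZMod d) (ZMod d) ℂ) :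
    (1 / (d : ℂ)) • ∑ k : ZMod d, ∑ j : ZMod d, weylSymbol d ρ k j • (Dop d k j)ᴴ = ρ := by
  have hdC : (d : ℂ) ≠ 0 := Nat.cast_ne_zero.mpr hd.pos.ne'
  ext p q
  rw [Matrix.smul_apply, Matrix.sum_apply]
  have hj : ∀ k : ZMod d, (∑ j : ZMod d, weylSymbol d ρ k j • (Dop d k j)ᴴ) p q
      = weylSymbol d ρ k (q - p) * wpow d (2⁻¹ * k * (q - p) - k * q) := by
    intro k
    rw [Matrix.sum_apply]
    rw [Finset.sum_eq_single (q - p)]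
    · rw [Matrix.smul_apply, DopH_apply, if_pos (by rw [add_sub_cancel]), smul_eq_mul]
    · intro j _ hne
      rw [Matrix.smul_apply, DopH_apply, if_neg (fun h => hne (by rw [h]; ring)), smul_zero]
    · intro h; exact absurd (Finset.mem_univ _) h
  rw [Finset.sum_congr rfl (fun k _ => hj k)]
  have hterm : ∀ k : ZMod d, weylSymbol d ρ k (q - p) * wpow d (2⁻¹ * k * (q - p) - k * q)
      = ∑ x : ZMod d, ρ x (x + (q - p)) * wpow d (k * (x - p)) := by
    intro k
    rw [weyl_apply, Finset.sum_mul]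
    refine Finset.sum_congr rfl fun x _ => ?_
    rw [mul_assoc, ← wpow_add]
    congr 2
    ring
  rw [Finset.sum_congr rfl (fun k _ => hterm k), Finset.sum_comm]
  have hx : ∀ x : ZMod d, ∑ k : ZMod d, ρ x (x + (q - p)) * wpow d (k * (x - p))
      = ρ x (x + (q - p)) * (if x - p = 0 then (d : ℂ) else 0) := by
    intro x
    rw [← Finset.mul_sum, sum_wpow_delta hd hodd]
  rw [Finset.sum_congr rfl (fun x _ => hx x)]
  rw [Finset.sum_eq_single p]
  · rw [if_pos (sub_self p), add_sub_cancel, smul_eq_mul]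
    field_simp
  · intro x _ hne
    rw [if_neg (fun h => hne (by rwa [sub_eq_zero] at h)), mul_zero]
  · intro h; exact absurd (Finset.mem_univ _) h

lemma sum_comm_mid {M : Type*} [AddCommMonoid M] {ι : Type*} [Fintype ι] (g : ι → ι → ι → M) :
    ∑ m : ι, ∑ a : ι, ∑ b : ι, g m a b = ∑ a : ι, ∑ b : ι, ∑ m : ι, g m a b := by
  rw [Finset.sum_comm]
  exact Finset.sum_congr rfl fun a _ => Finset.sum_comm

lemma sum_comm4 {M : Type*} [AddCommMonoid M] {ι : Type*} [Fintype ι] (g : ι → ι → ι → ι → M) :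
    ∑ m : ι, ∑ n : ι, ∑ a : ι, ∑ b : ι, g m n a b
      = ∑ a : ι, ∑ b : ι, ∑ m : ι, ∑ n : ι, g m n a b := by
  rw [Finset.sum_congr rfl (fun m _ => sum_comm_mid (g m))]
  exact sum_comm_mid (fun m a b => ∑ n, g m n a b)

lemma scalarA (hd : Nat.Prime d) (hodd : Odd d) (ρ : Matrix (ZMod d) (ZMod d) ℂ)
    (k j : ZMod d) :
    ∑ m : ZMod d, ∑ n : ZMod d, wignerFn d ρ m n * wpow d (k * m - j * n)
      = weylSymbol d ρ k j := by
  have hdC : (d : ℂ) ≠ 0 := Nat.cast_ne_zero.mpr hd.pos.ne'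
  have h1 : ∀ m n : ZMod d, wignerFn d ρ m n * wpow d (k * m - j * n)
      = ∑ k' : ZMod d, ∑ j' : ZMod d,
        (1 / (d : ℂ) ^ 2 * weylSymbol d ρ k' j') * (wpow d (m * (k - k')) * wpow d (n * (j' - j))) := by
    intro m n
    rw [wignerFn, mul_assoc, Finset.sum_mul, Finset.mul_sum]
    refine Finset.sum_congr rfl fun k' _ => ?_
    rw [Finset.sum_mul, Finset.mul_sum]
    refine Finset.sum_congr rfl fun j' _ => ?_
    have hw : wpow d (j' * n - k' * m) * wpow d (k * m - j * n)
        = wpow d (m * (k - k')) * wpow d (n * (j' - j)) := by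
      rw [← wpow_add, ← wpow_add]
      congr 1
      ring
    rw [mul_assoc (weylSymbol d ρ k' j'), hw]
    ring
  simp only [h1]
  rw [sum_comm4]
  have h2 : ∀ k' j' : ZMod d,
      ∑ m : ZMod d, ∑ n : ZMod d,
        (1 / (d : ℂ) ^ 2 * weylSymbol d ρ k' j') * (wpow d (m * (k - k')) * wpow d (n * (j' - j)))
      = (1 / (d : ℂ) ^ 2 * weylSymbol d ρ k' j') *
          ((if k - k' = 0 then (d : ℂ) else 0) * (if j' - j = 0 then (d : ℂ) else 0)) := by
    intro k' j'
    rw [← sum_wpow_delta hd hodd (k - k'), ← sum_wpow_delta hd hodd (j' - j),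
      Finset.sum_mul_sum, Finset.mul_sum]
    refine Finset.sum_congr rfl fun m _ => ?_
    rw [Finset.mul_sum]
  simp only [h2]
  rw [Finset.sum_eq_single k]
  · rw [Finset.sum_eq_single j]
    · rw [if_pos (sub_self k), if_pos (sub_self j)]
      calc 1 / (d:ℂ)^2 * weylSymbol d ρ k j * ((d:ℂ) * (d:ℂ))
          = weylSymbol d ρ k j * (((d:ℂ)*(d:ℂ)) / (d:ℂ)^2) := by ring
        _ = weylSymbol d ρ k j := by
            rw [show ((d:ℂ)*(d:ℂ)) = (d:ℂ)^2 by ring, div_self (pow_ne_zero 2 hdC), mul_one]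
    · intro j' _ hne
      have hzz : j' - j ≠ 0 := fun h => hne (by rwa [sub_eq_zero] at h)
      simp [hzz]
    · intro h; exact absurd (Finset.mem_univ _) h
  · intro k' _ hne
    have hzz : k - k' ≠ 0 := fun h => hne (by rw [← sub_eq_zero]; rwa [← neg_sub, neg_eq_zero] at h)
    simp [hzz]
  · intro h; exact absurd (Finset.mem_univ _) h

lemma stepA (hd : Nat.Prime d) (hodd : Odd d) (ρ : Matrix (ZMod d) (ZMod d) ℂ) :
    ∑ m : ZMod d, ∑ n : ZMod d, wignerFn d ρ m n • phasePoint d m n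
      = (1 / (d : ℂ)) • ∑ k : ZMod d, ∑ j : ZMod d, weylSymbol d ρ k j • (Dop d k j)ᴴ := by
  have h1 : ∀ m n : ZMod d, wignerFn d ρ m n • phasePoint d m n
      = ∑ k : ZMod d, ∑ j : ZMod d,
          (wignerFn d ρ m n * (1 / (d : ℂ)) * wpow d (k * m - j * n)) • (Dop d k j)ᴴ := by
    intro m n
    rw [phasePoint, smul_smul, Finset.smul_sum]
    refine Finset.sum_congr rfl fun k _ => ?_
    rw [Finset.smul_sum]
    refine Finset.sum_congr rfl fun j _ => ?_
    rw [smul_smul, mul_assoc]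
  have h2 : (1 / (d : ℂ)) • ∑ k : ZMod d, ∑ j : ZMod d, weylSymbol d ρ k j • (Dop d k j)ᴴ
      = ∑ k : ZMod d, ∑ j : ZMod d, ((1 / (d : ℂ)) * weylSymbol d ρ k j) • (Dop d k j)ᴴ := by
    rw [Finset.smul_sum]
    refine Finset.sum_congr rfl fun k _ => ?_
    rw [Finset.smul_sum]
    simp only [smul_smul]
  simp only [h1]
  rw [sum_comm4, h2]
  refine Finset.sum_congr rfl fun k _ => Finset.sum_congr rfl fun j _ => ?_
  simp only [← Finset.sum_smul]
  congr 1
  rw [← scalarA hd hodd ρ k j, Finset.mul_sum]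
  refine Finset.sum_congr rfl fun m _ => ?_
  rw [Finset.mul_sum]
  refine Finset.sum_congr rfl fun n _ => ?_
  ring


end Aux

theorem wigner_reconstruction
    (d : ℕ) [NeZero d] (hd : Nat.Prime d) (hodd : Odd d)
    (ρ : Matrix (ZMod d) (ZMod d) ℂ) :
    ρ = ∑ m : ZMod d, ∑ n : ZMod d, wignerFn d ρ m n • phasePoint d m n :=
  ((stepA hd hodd ρ).trans (stepB hd hodd ρ)).symm
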